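/- arXiv:math/0503641 — 3 statements merged into one kernel-verified Lean document; each statement's English description precedes it below -/
import Mathlib

section
/- There exist positive real constants C₁, C₂, C₃ such that for every complex number α with 0 < Re(α) < 1/6 and all integers n, k with 1 ≤ k < n, one has |∏_{j=1}^{k} ((e^{α/2} − e^{−α/2})² − (e^{jα/(2n)} − e^{−jα/(2n)})²)| ≤ exp(C₁ · k · log|α| + C₂ · log k + C₃). -/
/-!
With `t = j / n`, the `j`-th factor of the kernel is `2 (cosh α - cosh (t α))
= 4 sinh (c α) sinh (d α)` where `c = (1 + t) / 2`, `d = (1 - t) / 2`, and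
`‖sinh z‖² = sinh² (re z) + sin² (im z)`. We show that every factor has norm at most
`|α| ^ (2 - ε)` with `ε = 1/100`, so the kernel is at most `|α| ^ ((2 - ε) k)`.

An exponent `< 2` is forced (for real `α` and `t → 0` the factor is `4 sinh² (α/2) > α²`) and is
paid for by `r ^ (2 - ε) ≥ r² (1 - ε log r)`. Since `c d ≤ 1/4` and `|re α| ≤ 1/6` gives
`sinh² u ≤ (1 + ε) u²`, a factor is at most `(1 + ε) x² + y²` (`α = x + i y`), which suffices for
`|α| ≤ 9/10`. For `9/10 ≤ |α| ≤ 5/2` the imaginary part is bounded away from `0`, and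
`sin² v ≤ (24/25) v²` on the relevant range supplies the missing factor. For `|α| ≥ 5/2` the
trivial bound `5` on a factor is enough.
-/

/-- The evaluation of the cyclotomic kernel `C_{n,k}` at `q = e^{α/n}`:
`K(n,k,α) = ∏_{j=1}^{k} ((e^{α/2} − e^{−α/2})² − (e^{jα/(2n)} − e^{−jα/(2n)})²)`. -/
noncomputable def cycKer (n k : ℕ) (α : ℂ) : ℂ :=
  ∏ j ∈ Finset.Icc 1 k,
    ((Complex.exp (α / 2) - Complex.exp (-α / 2)) ^ 2
      - (Complex.exp ((j : ℂ) * α / (2 * n)) - Complex.exp (-((j : ℂ) * α / (2 * n)))) ^ 2)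

open Real

theorem Complex.norm_sinh_sq (z : ℂ) :
    ‖Complex.sinh z‖ ^ 2 = Real.sinh z.re ^ 2 + Real.sin z.im ^ 2 := by
  conv_lhs => rw [← Complex.re_add_im z]
  rw [Complex.sinh_add, Complex.sinh_mul_I, Complex.cosh_mul_I, Complex.sq_norm,
    Complex.normSq_apply]
  simp only [Complex.add_re, Complex.add_im, Complex.mul_re, Complex.mul_im, Complex.I_re,
    Complex.I_im, Complex.sinh_ofReal_re, Complex.cosh_ofReal_re, Complex.sin_ofReal_re,
    Complex.cos_ofReal_re, Complex.sinh_ofReal_im, Complex.cosh_ofReal_im, Complex.sin_ofReal_im,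
    Complex.cos_ofReal_im]
  nlinarith [Real.cosh_sq z.re, Real.sin_sq_add_cos_sq z.im]

theorem Real.sinh_sq_le_of_abs_le {u : ℝ} (hu : |u| ≤ 1 / 6) : sinh u ^ 2 ≤ 101 / 100 * u ^ 2 := by
  wlog h0 : 0 ≤ u generalizing u
  · simpa using this (u := -u) (by rwa [abs_neg]) (by linarith)
  rw [abs_of_nonneg h0] at hu
  have hu₁ : |u| ≤ 1 := by rw [abs_of_nonneg h0]; linarith
  have hp := Real.exp_bound hu₁ (n := 5) (by norm_num)
  have hm := Real.exp_bound (x := -u) (by rwa [abs_neg]) (n := 5) (by norm_num)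
  simp only [Finset.sum_range_succ, Finset.sum_range_zero, abs_neg, abs_of_nonneg h0] at hp hm
  norm_num [Nat.factorial] at hp hm
  have hs : sinh u ≤ 1.0047 * u := by
    rw [Real.sinh_eq]
    nlinarith [(abs_le.1 hp).2, (abs_le.1 hm).1, pow_nonneg h0 3, pow_nonneg h0 4]
  nlinarith [Real.sinh_nonneg_iff.2 h0]

theorem Real.sin_sq_le_of_sq_mem {v : ℝ} (h₁ : 3 / 16 ≤ v ^ 2) (h₂ : v ^ 2 ≤ 16) :
    sin v ^ 2 ≤ 24 / 25 * v ^ 2 := by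
  wlog hv : 0 ≤ v generalizing v
  · simpa using this (v := -v) (by simpa using h₁) (by simpa using h₂) (by linarith)
  obtain ⟨u, rfl⟩ : ∃ u, v = 2 * u := ⟨v / 2, by ring⟩
  have hu1 : 433 / 2000 ≤ u := by nlinarith
  have hu2 : u ≤ 2 := by nlinarith
  have hcube : 1 / 5 ≤ u - u ^ 3 / 6 := by
    nlinarith [mul_nonneg (mul_nonneg (sub_nonneg.2 hu1) (sub_nonneg.2 hu2)) (by linarith : 0 ≤ u)]
  have hs_lo : 1 / 25 ≤ sin u ^ 2 := by nlinarith [Real.sin_ge_sub_cube (by linarith : 0 ≤ u)]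
  have hs_hi : sin u ^ 2 ≤ u ^ 2 := Real.sin_sq_le_sq
  have hdouble : sin (2 * u) ^ 2 = 4 * sin u ^ 2 * (1 - sin u ^ 2) := by
    rw [Real.sin_two_mul, ← Real.cos_sq']; ring
  rw [hdouble]
  nlinarith [Real.sin_sq_le_one u]

theorem Real.sq_mul_one_sub_mul_log_le_rpow {r : ℝ} (hr : 0 < r) (ε : ℝ) :
    r ^ 2 * (1 - ε * log r) ≤ r ^ (2 - ε) := by
  have hsplit : r ^ (2 - ε) = r ^ 2 * exp (-(ε * log r)) := by
    rw [Real.rpow_sub hr, Real.rpow_two, Real.rpow_def_of_pos hr, div_eq_mul_inv, ← Real.exp_neg,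
      mul_comm (log r)]
  rw [hsplit]
  gcongr
  linarith [Real.add_one_le_exp (-(ε * log r))]

theorem sq_four_mul_mul_le_of_add_eq_one {a b c d A B : ℝ} (hc : 0 ≤ c) (hd : 0 ≤ d)
    (hcd : c + d = 1) (hA : 0 ≤ A) (hB : 0 ≤ B) (ha : a ^ 2 ≤ c ^ 2 * A) (hb : b ^ 2 ≤ d ^ 2 * B) :
    (4 * a * b) ^ 2 ≤ A * B := by
  have hcd4 : 4 * (c * d) ≤ 1 := by nlinarith [sq_nonneg (c - d)]
  calc (4 * a * b) ^ 2 = 16 * (a ^ 2 * b ^ 2) := by ring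
    _ ≤ 16 * (c ^ 2 * A * (d ^ 2 * B)) := by gcongr
    _ = (4 * (c * d)) ^ 2 * (A * B) := by ring
    _ ≤ A * B := by
        have h : (4 * (c * d)) ^ 2 ≤ 1 := pow_le_one₀ (by positivity) hcd4
        nlinarith [mul_nonneg hA hB]

section
variable {α : ℂ} {c : ℝ}

theorem norm_sinh_ofReal_mul_sq_le (hre : |α.re| ≤ 1 / 6) (hc₀ : 0 ≤ c) (hc₁ : c ≤ 1) :
    ‖Complex.sinh (c * α)‖ ^ 2 ≤ c ^ 2 * (101 / 100 * α.re ^ 2 + α.im ^ 2) := by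
  have hcre : |c * α.re| ≤ 1 / 6 := by
    rw [abs_mul, abs_of_nonneg hc₀]; nlinarith [abs_nonneg α.re]
  rw [Complex.norm_sinh_sq, Complex.re_ofReal_mul, Complex.im_ofReal_mul]
  nlinarith [Real.sinh_sq_le_of_abs_le hcre, Real.sin_sq_le_sq (x := c * α.im)]

theorem norm_sinh_ofReal_mul_sq_le_of_im_sq_mem (hre : |α.re| ≤ 1 / 6) (hc₀ : 1 / 2 ≤ c)
    (hc₁ : c ≤ 1) (him₁ : 3 / 4 ≤ α.im ^ 2) (him₂ : α.im ^ 2 ≤ 16) :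
    ‖Complex.sinh (c * α)‖ ^ 2 ≤ c ^ 2 * (101 / 100 * α.re ^ 2 + 24 / 25 * α.im ^ 2) := by
  have hcre : |c * α.re| ≤ 1 / 6 := by
    rw [abs_mul, abs_of_nonneg (by linarith)]; nlinarith [abs_nonneg α.re]
  have hc2 : 1 / 4 ≤ c ^ 2 ∧ c ^ 2 ≤ 1 := ⟨by nlinarith, by nlinarith⟩
  have hcim : 3 / 16 ≤ (c * α.im) ^ 2 ∧ (c * α.im) ^ 2 ≤ 16 := by
    rw [mul_pow]; constructor <;> nlinarith
  rw [Complex.norm_sinh_sq, Complex.re_ofReal_mul, Complex.im_ofReal_mul]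
  nlinarith [Real.sinh_sq_le_of_abs_le hcre, Real.sin_sq_le_of_sq_mem hcim.1 hcim.2]

theorem norm_sinh_ofReal_mul_sq_le_of_abs_re_le (hre : |α.re| ≤ 1 / 6) (hc₀ : 0 ≤ c)
    (hc₁ : c ≤ 1) : ‖Complex.sinh (c * α)‖ ^ 2 ≤ 103 / 100 := by
  have hcre : |c * α.re| ≤ 1 / 6 := by
    rw [abs_mul, abs_of_nonneg hc₀]; nlinarith [abs_nonneg α.re]
  have hcre2 : (c * α.re) ^ 2 ≤ 1 / 36 := by
    nlinarith [sq_abs (c * α.re), abs_nonneg (c * α.re)]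
  rw [Complex.norm_sinh_sq, Complex.re_ofReal_mul, Complex.im_ofReal_mul]
  nlinarith [Real.sinh_sq_le_of_abs_le hcre, Real.sin_sq_le_one (c * α.im)]

end

section
variable {α : ℂ}

theorem re_sq_add_im_sq_le_rpow_of_norm_le (hα : α ≠ 0) (hre : |α.re| ≤ 1 / 6)
    (hr : ‖α‖ ≤ 9 / 10) : 101 / 100 * α.re ^ 2 + α.im ^ 2 ≤ ‖α‖ ^ (199 / 100 : ℝ) := by
  have hr₀ : 0 < ‖α‖ := norm_pos_iff.2 hα
  have hrpow := Real.sq_mul_one_sub_mul_log_le_rpow hr₀ (1 / 100)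
  rw [show (2 : ℝ) - 1 / 100 = 199 / 100 by norm_num] at hrpow
  have hnorm := Complex.sq_norm_sub_sq_re α
  suffices α.re ^ 2 ≤ ‖α‖ ^ 2 * -log ‖α‖ by nlinarith
  rcases le_or_gt ‖α‖ (exp (-1)) with hsmall | hlarge
  · have hlog : log ‖α‖ ≤ -1 := (Real.log_le_iff_le_exp hr₀).2 hsmall
    nlinarith [sq_nonneg α.im, sq_nonneg ‖α‖]
  · have hr₁ : 1 / 3 < ‖α‖ := by linarith [Real.exp_neg_one_gt_d9]
    have hre2 : α.re ^ 2 ≤ 1 / 36 := by nlinarith [sq_abs α.re, abs_nonneg α.re]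
    calc α.re ^ 2 ≤ ‖α‖ ^ 2 * (1 - ‖α‖) := by
          nlinarith [mul_nonneg (sub_nonneg.2 hr₁.le) (sub_nonneg.2 hr),
            mul_nonneg (mul_nonneg (sub_nonneg.2 hr₁.le) (sub_nonneg.2 hr)) hr₀.le]
      _ ≤ ‖α‖ ^ 2 * -log ‖α‖ := by gcongr; linarith [Real.log_le_sub_one_of_pos hr₀]

theorem mul_le_rpow_sq_of_norm_mem (hα : α ≠ 0) (hre : |α.re| ≤ 1 / 6) (hr₁ : 9 / 10 ≤ ‖α‖)
    (hr₂ : ‖α‖ ≤ 5 / 2) :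
    (101 / 100 * α.re ^ 2 + 24 / 25 * α.im ^ 2) * (101 / 100 * α.re ^ 2 + α.im ^ 2) ≤
      (‖α‖ ^ (199 / 100 : ℝ)) ^ 2 := by
  have hr₀ : 0 < ‖α‖ := norm_pos_iff.2 hα
  have hrpow := Real.sq_mul_one_sub_mul_log_le_rpow hr₀ (1 / 100)
  rw [show (2 : ℝ) - 1 / 100 = 199 / 100 by norm_num] at hrpow
  have hlower : 197 / 200 * ‖α‖ ^ 2 ≤ ‖α‖ ^ (199 / 100 : ℝ) := by
    nlinarith [Real.log_le_sub_one_of_pos hr₀, sq_nonneg ‖α‖]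
  have hnorm : ‖α‖ ^ 2 = α.re ^ 2 + α.im ^ 2 := by linarith [Complex.sq_norm_sub_sq_re α]
  have hre2 : α.re ^ 2 ≤ 1 / 36 := by nlinarith [sq_abs α.re, abs_nonneg α.re]
  have hnorm₁ : 81 / 100 ≤ α.re ^ 2 + α.im ^ 2 := by nlinarith
  calc (101 / 100 * α.re ^ 2 + 24 / 25 * α.im ^ 2) * (101 / 100 * α.re ^ 2 + α.im ^ 2)
      ≤ (197 / 200 * ‖α‖ ^ 2) ^ 2 := by
        rw [hnorm]
        nlinarith [mul_nonneg (sq_nonneg α.re) (sub_nonneg.2 hre2),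
          mul_nonneg (sub_nonneg.2 hnorm₁) (sub_nonneg.2 hre2),
          mul_nonneg (sub_nonneg.2 hnorm₁) (sq_nonneg α.re)]
    _ ≤ (‖α‖ ^ (199 / 100 : ℝ)) ^ 2 := by gcongr
end

theorem five_le_rpow_of_five_halves_le {r : ℝ} (hr : 5 / 2 ≤ r) : 5 ≤ r ^ (199 / 100 : ℝ) := by
  have hrpow := Real.sq_mul_one_sub_mul_log_le_rpow (by norm_num : (0 : ℝ) < 5 / 2) (1 / 100)
  rw [show (2 : ℝ) - 1 / 100 = 199 / 100 by norm_num] at hrpow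
  have hlog := Real.log_le_sub_one_of_pos (by norm_num : (0 : ℝ) < 5 / 2)
  calc (5 : ℝ) ≤ (5 / 2) ^ (199 / 100 : ℝ) := by nlinarith
    _ ≤ r ^ (199 / 100 : ℝ) := by gcongr

theorem four_mul_norm_sinh_mul_norm_sinh_le_rpow {α : ℂ} {c d : ℝ} (hα : α ≠ 0)
    (hre : |α.re| ≤ 1 / 6) (hd : 0 ≤ d) (hdc : d ≤ c) (hcd : c + d = 1) :
    4 * ‖Complex.sinh (c * α)‖ * ‖Complex.sinh (d * α)‖ ≤ ‖α‖ ^ (199 / 100 : ℝ) := by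
  have hc₁ : c ≤ 1 := by linarith
  have hd₁ : d ≤ 1 := by linarith
  refine le_of_pow_le_pow_left₀ two_ne_zero (by positivity) ?_
  rcases le_or_gt ‖α‖ (9 / 10) with hsmall | hr₁
  · have hM := re_sq_add_im_sq_le_rpow_of_norm_le hα hre hsmall
    refine (sq_four_mul_mul_le_of_add_eq_one (hd.trans hdc) hd hcd (by positivity)
      (by positivity) (norm_sinh_ofReal_mul_sq_le hre (hd.trans hdc) hc₁)
      (norm_sinh_ofReal_mul_sq_le hre hd hd₁)).trans ?_
    rw [← sq]
    gcongr
  rcases le_or_gt ‖α‖ (5 / 2) with hr₂ | hlarge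
  · have hnorm := Complex.sq_norm_sub_sq_re α
    have him₁ : 3 / 4 ≤ α.im ^ 2 := by nlinarith [sq_abs α.re, abs_nonneg α.re]
    have him₂ : α.im ^ 2 ≤ 16 := by nlinarith [sq_nonneg α.re]
    exact (sq_four_mul_mul_le_of_add_eq_one (hd.trans hdc) hd hcd (by positivity)
      (by positivity) (norm_sinh_ofReal_mul_sq_le_of_im_sq_mem hre (by linarith) hc₁ him₁ him₂)
      (norm_sinh_ofReal_mul_sq_le hre hd hd₁)).trans
      (mul_le_rpow_sq_of_norm_mem hα hre hr₁.le hr₂)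
  · calc (4 * ‖Complex.sinh (c * α)‖ * ‖Complex.sinh (d * α)‖) ^ 2
        = 16 * (‖Complex.sinh (c * α)‖ ^ 2 * ‖Complex.sinh (d * α)‖ ^ 2) := by ring
      _ ≤ 16 * (103 / 100 * (103 / 100)) := by
          gcongr
          · exact norm_sinh_ofReal_mul_sq_le_of_abs_re_le hre (hd.trans hdc) hc₁
          · exact norm_sinh_ofReal_mul_sq_le_of_abs_re_le hre hd hd₁
      _ ≤ 5 ^ 2 := by norm_num
      _ ≤ _ := by gcongr; exact five_le_rpow_of_five_halves_le hlarge.le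

theorem Complex.exp_sub_exp_neg_sq_sub_sq (z w : ℂ) :
    (exp z - exp (-z)) ^ 2 - (exp w - exp (-w)) ^ 2 = 4 * sinh (z + w) * sinh (z - w) := by
  rw [← Complex.two_sinh, ← Complex.two_sinh, Complex.sinh_add, Complex.sinh_sub]
  linear_combination (4 * sinh w ^ 2) * Complex.cosh_sq z - (4 * sinh z ^ 2) * Complex.cosh_sq w

theorem norm_cycKer_le {α : ℂ} (hα : α ≠ 0) (hre : |α.re| ≤ 1 / 6) {n k : ℕ} (hkn : k ≤ n) :
    ‖cycKer n k α‖ ≤ (‖α‖ ^ (199 / 100 : ℝ)) ^ k := by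
  rw [cycKer, norm_prod]
  refine (Finset.prod_le_prod (fun _ _ ↦ norm_nonneg _) fun j hj ↦ ?_).trans_eq
    (by rw [Finset.prod_const, Nat.card_Icc, Nat.add_sub_cancel])
  obtain ⟨hj₁, hj₂⟩ := Finset.mem_Icc.1 hj
  have hjn : (j : ℝ) ≤ n := by exact_mod_cast hj₂.trans hkn
  have hn : (0 : ℝ) < n := by exact_mod_cast (by omega : 0 < n)
  have hnC : (n : ℂ) ≠ 0 := by exact_mod_cast hn.ne'
  rw [neg_div, Complex.exp_sub_exp_neg_sq_sub_sq,
    show α / 2 + j * α / (2 * n) = (((n + j) / (2 * n) : ℝ) : ℂ) * α by push_cast; field_simp,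
    show α / 2 - j * α / (2 * n) = (((n - j) / (2 * n) : ℝ) : ℂ) * α by push_cast; field_simp,
    norm_mul, norm_mul, Complex.norm_ofNat]
  exact four_mul_norm_sinh_mul_norm_sinh_le_rpow hα hre (by apply div_nonneg <;> linarith)
    (by gcongr; linarith [j.cast_nonneg (α := ℝ)]) (by field_simp; ring)

/-- There exist positive constants `C₁, C₂, C₃` such that for every complex `α`
with `0 < Re α < 1/6` and integers `1 ≤ k < n`,
`|K(n,k,α)| ≤ exp(C₁ k log|α| + C₂ log k + C₃)`. -/
theorem cyclotomic_kernel_estimate :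
    ∃ C₁ C₂ C₃ : ℝ, 0 < C₁ ∧ 0 < C₂ ∧ 0 < C₃ ∧
      ∀ α : ℂ, 0 < α.re → α.re < 1 / 6 → ∀ n k : ℕ, 1 ≤ k → k < n →
        ‖cycKer n k α‖ ≤
          Real.exp (C₁ * k * Real.log ‖α‖ + C₂ * Real.log k + C₃) := by
  refine ⟨199 / 100, 1, 1, by norm_num, by norm_num, by norm_num,
    fun α hre₀ hre₁ n k _ hkn ↦ ?_⟩
  have hα : α ≠ 0 := by rintro rfl; simp at hre₀
  calc ‖cycKer n k α‖ ≤ (‖α‖ ^ (199 / 100 : ℝ)) ^ k :=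
        norm_cycKer_le hα (abs_le.2 ⟨by linarith, hre₁.le⟩) hkn.le
    _ = Real.exp (199 / 100 * k * Real.log ‖α‖) := by
        rw [← Real.rpow_natCast, ← Real.rpow_mul (norm_nonneg _),
          Real.rpow_def_of_pos (norm_pos_iff.2 hα)]
        ring_nf
    _ ≤ _ := Real.exp_le_exp.2 (by linarith [Real.log_natCast_nonneg k])
end

section
/- Let r, M > 0 and let (f_n)_{n≥0} be a sequence of functions f_n : ℂ → ℂ, each complex-differentiable on the open disk Δ_r = {z ∈ ℂ : |z| < r} and satisfying |f_n(z)| ≤ M for all z ∈ Δ_r. Suppose that for every integer m ≥ 0 there exists a_m ∈ ℂ such that the m-th derivatives satisfy f_n^{(m)}(0) → a_m as n → ∞. Then there exists a function f : ℂ → ℂ, complex-differentiable on Δ_r with |f(z)| ≤ M on Δ_r, such that: f_n(z) → f(z) for every z ∈ Δ_r; the convergence f_n → f is uniform on every compact subset of Δ_r; and f^{(m)}(0) = a_m for every m ≥ 0. -/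
/-!
By Cauchy's estimate the Taylor coefficients `c n m = f_n^{(m)}(0) / m!` satisfy
`‖c n m‖ * r ^ m ≤ M`, and by hypothesis they converge to `b m = a m / m!`, which obey the same
bound. On a closed disk of radius `ρ < r` the difference `f_n - ∑ b m z ^ m` is therefore bounded
by `∑ ‖c n m - b m‖ ρ ^ m`, a series dominated by `2 M (ρ / r) ^ m` whose terms tend to zero; by
Tannery's theorem it tends to zero. So `f_n` converges locally uniformly to the power series
`g = ∑ b m z ^ m`, which is holomorphic on `Δ_r` with `g^{(m)}(0) = m! b m = a m`.
-/

open Filter Metric Topology Nat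

namespace Complex

theorem norm_iteratedDeriv_le_of_forall_mem_ball_norm_le {F : Type*} [NormedAddCommGroup F]
    [NormedSpace ℂ F] [CompleteSpace F] {f : ℂ → F} {c : ℂ} {R C : ℝ} (n : ℕ) (hR : 0 < R)
    (hf : DifferentiableOn ℂ f (ball c R)) (hC : ∀ z ∈ ball c R, ‖f z‖ ≤ C) :
    ‖iteratedDeriv n f c‖ ≤ n ! * C / R ^ n := by
  have hsmall : ∀ s ∈ Set.Ioo 0 R, ‖iteratedDeriv n f c‖ ≤ n ! * C / s ^ n := by
    intro s ⟨hs₀, hsR⟩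
    have hsub : closedBall c s ⊆ ball c R := closedBall_subset_ball hsR
    refine norm_iteratedDeriv_le_of_forall_mem_sphere_norm_le n hs₀ ?_
      fun z hz => hC z (hsub (sphere_subset_closedBall hz))
    exact (hf.mono <| (closure_ball c hs₀.ne').symm ▸ hsub).diffContOnCl
  have hcont : Tendsto (fun s : ℝ => n ! * C / s ^ n) (𝓝[<] R) (𝓝 (n ! * C / R ^ n)) :=
    ((continuousAt_const.div (continuousAt_id.pow n) (pow_ne_zero n hR.ne')).tendsto).mono_left
      nhdsWithin_le_nhds
  exact ge_of_tendsto hcont (eventually_of_mem (Ioo_mem_nhdsLT hR) hsmall)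

end Complex

section PowerSeries

variable {𝕜 : Type*} [NontriviallyNormedField 𝕜] [CompleteSpace 𝕜]

theorem hasFPowerSeriesOnBall_tsum_mul_pow {b : ℕ → 𝕜} {C r : ℝ} (hr : 0 < r)
    (hb : ∀ m, ‖b m‖ * r ^ m ≤ C) :
    HasFPowerSeriesOnBall (fun z => ∑' m, b m * z ^ m) (.ofScalars 𝕜 b) 0 (ENNReal.ofReal r) := by
  set p := FormalMultilinearSeries.ofScalars 𝕜 b
  have hradius : ENNReal.ofReal r ≤ p.radius :=
    p.le_radius_of_bound C fun m => by
      simpa [p, FormalMultilinearSeries.ofScalars_norm, Real.coe_toNNReal r hr.le] using hb m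
  have hsum : p.sum = fun z => ∑' m, b m * z ^ m :=
    funext (FormalMultilinearSeries.ofScalars_sum_eq (E := 𝕜) b)
  exact hsum ▸ (p.hasFPowerSeriesOnBall ((ENNReal.ofReal_pos.2 hr).trans_le hradius)).mono
    (ENNReal.ofReal_pos.2 hr) hradius

theorem HasFPowerSeriesAt.iteratedDeriv_eq_factorial_mul [CharZero 𝕜] {g : 𝕜 → 𝕜} {b : ℕ → 𝕜}
    {x : 𝕜} (hg : HasFPowerSeriesAt g (.ofScalars 𝕜 b) x) (m : ℕ) :
    iteratedDeriv m g x = m ! * b m := by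
  have hcoeff := congrArg (·.coeff m)
    (hg.analyticAt.hasFPowerSeriesAt.eq_formalMultilinearSeries hg)
  simp only [FormalMultilinearSeries.coeff_ofScalars] at hcoeff
  rw [← hcoeff, mul_div_cancel₀ _ (by exact_mod_cast m.factorial_ne_zero)]

theorem tendstoUniformlyOn_tsum_mul_pow {ι : Type*} {l : Filter ι} [l.NeBot]
    {c : ι → ℕ → 𝕜} {b : ℕ → 𝕜} {u : ℕ → ℝ} {ρ : ℝ} (hu : Summable u)
    (hc : ∀ n m, ‖c n m‖ * ρ ^ m ≤ u m)
    (hlim : ∀ m, Tendsto (fun n => c n m) l (𝓝 (b m))) :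
    TendstoUniformlyOn (fun n z => ∑' m, c n m * z ^ m) (fun z => ∑' m, b m * z ^ m) l
      (closedBall 0 ρ) := by
  rcases lt_or_ge ρ 0 with hρ | hρ
  · simp [closedBall_eq_empty.2 hρ, tendstoUniformlyOn_empty]
  have hb : ∀ m, ‖b m‖ * ρ ^ m ≤ u m := fun m =>
    le_of_tendsto ((hlim m).norm.mul_const _) (Eventually.of_forall fun n => hc n m)
  have hdiff : ∀ n m, ‖c n m - b m‖ * ρ ^ m ≤ 2 * u m := fun n m =>
    calc ‖c n m - b m‖ * ρ ^ m ≤ (‖c n m‖ + ‖b m‖) * ρ ^ m := by gcongr; exact norm_sub_le _ _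
      _ ≤ 2 * u m := by linarith [hc n m, hb m]
  have herr : Tendsto (fun n => ∑' m, ‖c n m - b m‖ * ρ ^ m) l (𝓝 0) := by
    simpa using tendsto_tsum_of_dominated_convergence (f := fun n m => ‖c n m - b m‖ * ρ ^ m)
      (g := fun _ => 0) (hu.mul_left 2)
      (fun m => by simpa using ((hlim m).sub_const (b m)).norm.mul_const (ρ ^ m))
      (Eventually.of_forall fun n m => by
        rw [Real.norm_of_nonneg (by positivity)]; exact hdiff n m)
  have hpt : ∀ n, ∀ z ∈ closedBall (0 : 𝕜) ρ,
      ‖∑' m, b m * z ^ m - ∑' m, c n m * z ^ m‖ ≤ ∑' m, ‖c n m - b m‖ * ρ ^ m := by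
    intro n z hz
    have hterm (d : ℕ → 𝕜) (m : ℕ) : ‖d m * z ^ m‖ ≤ ‖d m‖ * ρ ^ m := by
      rw [norm_mul, norm_pow]; gcongr; exact mem_closedBall_zero_iff.1 hz
    have hsc := hu.of_norm_bounded fun m => (hterm (c n) m).trans (hc n m)
    have hsb := hu.of_norm_bounded fun m => (hterm b m).trans (hb m)
    rw [norm_sub_rev, ← hsc.tsum_sub hsb]
    simp_rw [← sub_mul]
    exact tsum_of_norm_bounded ((hu.mul_left 2).of_nonneg_of_le (fun m => by positivity)
      (hdiff n)).hasSum fun m => hterm (fun m => c n m - b m) m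
  rw [Metric.tendstoUniformlyOn_iff]
  intro ε hε
  filter_upwards [herr.eventually (gt_mem_nhds hε)] with n hn z hz
  rw [dist_eq_norm]
  exact (hpt n z hz).trans_lt hn

theorem tendstoLocallyUniformlyOn_tsum_mul_pow {ι : Type*} {l : Filter ι} [l.NeBot]
    {c : ι → ℕ → 𝕜} {b : ℕ → 𝕜} {C r : ℝ} (hc : ∀ n m, ‖c n m‖ * r ^ m ≤ C)
    (hlim : ∀ m, Tendsto (fun n => c n m) l (𝓝 (b m))) :
    TendstoLocallyUniformlyOn (fun n z => ∑' m, c n m * z ^ m) (fun z => ∑' m, b m * z ^ m) l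
      (ball 0 r) := by
  refine tendstoLocallyUniformlyOn_of_forall_exists_nhds fun x hx => ?_
  obtain ⟨ρ, hxρ, hρr⟩ := exists_between (mem_ball_zero_iff.1 hx)
  have hρ : 0 < ρ := (norm_nonneg x).trans_lt hxρ
  have hr : 0 < r := hρ.trans hρr
  refine ⟨closedBall 0 ρ, mem_nhdsWithin_of_mem_nhds
    (closedBall_mem_nhds_of_mem (mem_ball_zero_iff.2 hxρ)), ?_⟩
  refine tendstoUniformlyOn_tsum_mul_pow (u := fun m => C * (ρ / r) ^ m)
    ((summable_geometric_of_lt_one (by positivity) ((div_lt_one hr).2 hρr)).mul_left C)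
    (fun n m => ?_) hlim
  calc ‖c n m‖ * ρ ^ m = ‖c n m‖ * r ^ m * (ρ / r) ^ m := by rw [div_pow]; field_simp
    _ ≤ C * (ρ / r) ^ m := by gcongr; exact hc n m

end PowerSeries

theorem vitali_montel_general (r M : ℝ) (hr : 0 < r) (f : ℕ → ℂ → ℂ)
    (hdiff : ∀ n : ℕ, DifferentiableOn ℂ (f n) (Metric.ball 0 r))
    (hbound : ∀ n : ℕ, ∀ z ∈ Metric.ball (0 : ℂ) r, ‖f n z‖ ≤ M)
    (a : ℕ → ℂ)
    (hconv : ∀ m : ℕ,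
      Filter.Tendsto (fun n : ℕ => iteratedDeriv m (f n) 0) Filter.atTop (nhds (a m))) :
    ∃ g : ℂ → ℂ, DifferentiableOn ℂ g (Metric.ball 0 r) ∧
      (∀ z ∈ Metric.ball (0 : ℂ) r, ‖g z‖ ≤ M) ∧
      (∀ z ∈ Metric.ball (0 : ℂ) r,
        Filter.Tendsto (fun n : ℕ => f n z) Filter.atTop (nhds (g z))) ∧
      (∀ K : Set ℂ, K ⊆ Metric.ball 0 r → IsCompact K →
        TendstoUniformlyOn f g Filter.atTop K) ∧
      (∀ m : ℕ, iteratedDeriv m g 0 = a m) := by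
  set c : ℕ → ℕ → ℂ := fun n m => (m ! : ℂ)⁻¹ * iteratedDeriv m (f n) 0
  set b : ℕ → ℂ := fun m => (m ! : ℂ)⁻¹ * a m
  set g : ℂ → ℂ := fun z => ∑' m, b m * z ^ m
  have hcb : ∀ m, Tendsto (fun n => c n m) atTop (𝓝 (b m)) := fun m => (hconv m).const_mul _
  have hc : ∀ n m, ‖c n m‖ * r ^ m ≤ M := fun n m => by
    have hcauchy :=
      Complex.norm_iteratedDeriv_le_of_forall_mem_ball_norm_le m hr (hdiff n) (hbound n)
    rw [norm_mul, norm_inv, norm_natCast, mul_assoc, inv_mul_le_iff₀ (by positivity),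
      ← le_div_iff₀ (by positivity)]
    exact hcauchy
  have hb : ∀ m, ‖b m‖ * r ^ m ≤ M := fun m =>
    le_of_tendsto ((hcb m).norm.mul_const _) (.of_forall (hc · m))
  have hg := hasFPowerSeriesOnBall_tsum_mul_pow hr hb
  have htaylor : ∀ n, Set.EqOn (fun z => ∑' m, c n m * z ^ m) (f n) (ball 0 r) := fun n z hz => by
    simpa [c] using Complex.taylorSeries_eq_on_ball' hz (hdiff n)
  have hlu : TendstoLocallyUniformlyOn f g atTop (ball 0 r) :=
    (tendstoLocallyUniformlyOn_tsum_mul_pow hc hcb).congr htaylor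
  have hpt : ∀ z ∈ ball (0 : ℂ) r, Tendsto (fun n => f n z) atTop (𝓝 (g z)) :=
    fun z hz => hlu.tendsto_at hz
  refine ⟨g, ?_, fun z hz => le_of_tendsto' (hpt z hz).norm fun n => hbound n z hz, hpt,
    (tendstoLocallyUniformlyOn_iff_forall_isCompact isOpen_ball).1 hlu, fun m => ?_⟩
  · simpa using hg.differentiableOn
  · rw [hg.hasFPowerSeriesAt.iteratedDeriv_eq_factorial_mul,
      mul_inv_cancel_left₀ (by exact_mod_cast m.factorial_ne_zero)]

/-- Vitali–Montel style lemma: Let `r, M > 0` and let `(f_n)` be a sequence of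
functions `ℂ → ℂ`, each holomorphic on the open disk `Δ_r` and bounded by `M` there.
If for every `m ≥ 0` the derivatives `f_n^{(m)}(0)` converge to some `a_m`, then there is a
function `f`, holomorphic on `Δ_r` and bounded by `M`, such that `f_n → f` pointwise on `Δ_r`,
uniformly on every compact subset of `Δ_r`, and `f^{(m)}(0) = a_m` for every `m`. -/
theorem vitali_montel (r M : ℝ) (hr : 0 < r) (hM : 0 < M) (f : ℕ → ℂ → ℂ)
    (hdiff : ∀ n : ℕ, DifferentiableOn ℂ (f n) (Metric.ball 0 r))
    (hbound : ∀ n : ℕ, ∀ z ∈ Metric.ball (0 : ℂ) r, ‖f n z‖ ≤ M)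
    (a : ℕ → ℂ)
    (hconv : ∀ m : ℕ,
      Filter.Tendsto (fun n : ℕ => iteratedDeriv m (f n) 0) Filter.atTop (nhds (a m))) :
    ∃ g : ℂ → ℂ, DifferentiableOn ℂ g (Metric.ball 0 r) ∧
      (∀ z ∈ Metric.ball (0 : ℂ) r, ‖g z‖ ≤ M) ∧
      (∀ z ∈ Metric.ball (0 : ℂ) r,
        Filter.Tendsto (fun n : ℕ => f n z) Filter.atTop (nhds (g z))) ∧
      (∀ K : Set ℂ, K ⊆ Metric.ball 0 r → IsCompact K →
        TendstoUniformlyOn f g Filter.atTop K) ∧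
      (∀ m : ℕ, iteratedDeriv m g 0 = a m) :=
  vitali_montel_general r M hr f hdiff hbound a hconv
end

section
/- Let (C_k)_{k≥0} be a sequence of Laurent polynomials with integer coefficients such that there exist positive constants A, B, D with ℓ¹-norm ‖C_k‖₁ ≤ e^{A k + B log k} and support of C_k contained in [−D k², D k²] for all k ≥ 1. Define f_n(α) = ∑_{k=0}^{n} K(n,k,α) · C_k(e^{α/n}) for integers n ≥ 1 and α ∈ ℂ, where K(n,k,α) = ∏_{j=1}^{k} ((e^{α/2} − e^{−α/2})² − (e^{jα/(2n)} − e^{−jα/(2n)})²), and let g(α) = ∑_{k=0}^{∞} C_k(1) · (e^{α/2} − e^{−α/2})^{2k}, which converges on some open neighborhood of 0. Then for every integer m ≥ 0 the limit lim_{n→∞} f_n^{(m)}(0) exists and equals g^{(m)}(0), the m-th complex derivative of g at 0. -/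
/-- The evaluation of an integer Laurent polynomial (a finitely supported function `ℤ → ℤ`)
at a complex number `q`: `∑_j a_j q^j`. -/
noncomputable def laurentEval (c : ℤ →₀ ℤ) (q : ℂ) : ℂ :=
  ∑ j ∈ c.support, (c j : ℂ) * q ^ j

/-- The ℓ¹-norm of an integer Laurent polynomial: `∑_j |a_j|`. -/
noncomputable def laurentL1 (c : ℤ →₀ ℤ) : ℝ :=
  ∑ j ∈ c.support, |(c j : ℝ)|

/-! On a small disc `‖α‖ ≤ r`, the `k`-th summand of `f_n` is within `M_k / n` of the `k`-th
summand of `g`, with `M_k = O(k² wᵏ)` and `w < 1`: each of the `k` factors of `K(n,k,α)` is within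
`O(k²/n²)` of `(e^{α/2} − e^{−α/2})²`, and since the exponents of `C_k` are `O(k²)`,
`C_k(e^{α/n})` is within `O(k²/n) e^{O(k)} ‖C_k‖₁` of `C_k(1)`. Together with the tails of `g`
this makes `f_n → g` uniformly on the disc, and Weierstrass' theorem lets the derivatives of the
holomorphic `f_n` follow. -/

open Filter Finset Topology

noncomputable def twoSinhHalf (z : ℂ) : ℂ := Complex.exp (z / 2) - Complex.exp (-z / 2)

theorem norm_twoSinhHalf_le {z : ℂ} (hz : ‖z‖ ≤ 2) : ‖twoSinhHalf z‖ ≤ 2 * ‖z‖ := by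
  have hz₁ : ‖z / 2‖ ≤ 1 := by rw [norm_div, Complex.norm_two]; linarith
  have hz₂ : ‖-z / 2‖ ≤ 1 := by rwa [neg_div, norm_neg]
  calc ‖twoSinhHalf z‖ = ‖(Complex.exp (z / 2) - 1) - (Complex.exp (-z / 2) - 1)‖ := by
        rw [twoSinhHalf, sub_sub_sub_cancel_right]
    _ ≤ 2 * ‖z / 2‖ + 2 * ‖-z / 2‖ :=
        norm_sub_le_of_le (Complex.norm_exp_sub_one_le hz₁) (Complex.norm_exp_sub_one_le hz₂)
    _ = 2 * ‖z‖ := by rw [neg_div, norm_neg, norm_div, Complex.norm_two]; ring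

theorem norm_twoSinhHalf_pow_le {z : ℂ} (hz : ‖z‖ ≤ 2) (k : ℕ) :
    ‖twoSinhHalf z ^ (2 * k)‖ ≤ (4 * ‖z‖ ^ 2) ^ k := by
  rw [pow_mul, norm_pow, norm_pow]
  gcongr
  nlinarith [norm_twoSinhHalf_le hz, norm_nonneg (twoSinhHalf z)]

theorem cycKer_eq_prod (n k : ℕ) (α : ℂ) :
    cycKer n k α = ∏ j ∈ Icc 1 k, (twoSinhHalf α ^ 2 - twoSinhHalf (j * α / n) ^ 2) := by
  refine prod_congr rfl fun j _ => ?_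
  simp only [twoSinhHalf]
  ring_nf

theorem norm_prod_sub_pow_le {R ι : Type*} [NormedCommRing R] [NormOneClass R] (s : Finset ι)
    (a : ι → R) {b : R} {M δ : ℝ} (hb : ‖b‖ ≤ M) (ha : ∀ i ∈ s, ‖a i‖ ≤ M)
    (hab : ∀ i ∈ s, ‖a i - b‖ ≤ δ * M) :
    ‖∏ i ∈ s, a i - b ^ #s‖ ≤ #s * δ * M ^ #s := by
  classical
  induction s using Finset.induction_on with
  | empty => simp
  | insert i s hi ih =>
    have ih' := ih (fun j hj ↦ ha j (mem_insert_of_mem hj))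
      (fun j hj ↦ hab j (mem_insert_of_mem hj))
    rw [prod_insert hi, card_insert_of_notMem hi, pow_succ']
    calc ‖a i * ∏ j ∈ s, a j - b * b ^ #s‖
        = ‖a i * (∏ j ∈ s, a j - b ^ #s) + (a i - b) * b ^ #s‖ := by ring_nf
      _ ≤ M * (#s * δ * M ^ #s) + δ * M * M ^ #s :=
        norm_add_le_of_le (norm_mul_le_of_le (ha i (mem_insert_self i s)) ih')
          (norm_mul_le_of_le (hab i (mem_insert_self i s))
            ((norm_pow_le b _).trans (pow_le_pow_left₀ (norm_nonneg b) hb _)))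
      _ = (↑(#s + 1) : ℝ) * δ * M ^ (#s + 1) := by push_cast; ring

theorem norm_cycKer_sub_pow_le {n k : ℕ} (hkn : k ≤ n) {x : ℂ} (hx : ‖x‖ ≤ 1) :
    ‖cycKer n k x - twoSinhHalf x ^ (2 * k)‖ ≤ k ^ 2 / n * (8 * ‖x‖ ^ 2) ^ k := by
  rcases Nat.eq_zero_or_pos k with rfl | hk
  · simp [cycKer]
  have hn : (0 : ℝ) < n := by exact_mod_cast hk.trans_le hkn
  have hkn' : (k : ℝ) ≤ n := by exact_mod_cast hkn
  have hs : ‖twoSinhHalf x ^ 2‖ ≤ 4 * ‖x‖ ^ 2 := by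
    simpa using norm_twoSinhHalf_pow_le (by linarith) 1 (z := x)
  have ht : ∀ j ∈ Icc 1 k, ‖twoSinhHalf (j * x / n) ^ 2‖ ≤ (k / n) ^ 2 / 2 * (8 * ‖x‖ ^ 2) := by
    intro j hj
    have hjk : (j : ℝ) ≤ k := by exact_mod_cast (mem_Icc.mp hj).2
    have hy : ‖(j : ℂ) * x / n‖ ≤ k / n * ‖x‖ := by
      rw [norm_div, norm_mul, Complex.norm_natCast, Complex.norm_natCast, mul_div_right_comm]
      gcongr
    have hkn1 : (k : ℝ) / n ≤ 1 := (div_le_one hn).mpr hkn'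
    have hy2 : ‖(j : ℂ) * x / n‖ ≤ 2 := by
      nlinarith [norm_nonneg x, (by positivity : (0 : ℝ) ≤ k / n)]
    calc ‖twoSinhHalf (j * x / n) ^ 2‖ ≤ 4 * ‖(j : ℂ) * x / n‖ ^ 2 := by
          simpa using norm_twoSinhHalf_pow_le hy2 1
      _ ≤ 4 * (k / n * ‖x‖) ^ 2 := by gcongr
      _ = (k / n) ^ 2 / 2 * (8 * ‖x‖ ^ 2) := by ring
  have hprod := norm_prod_sub_pow_le (Icc 1 k)
    (fun j : ℕ ↦ twoSinhHalf x ^ 2 - twoSinhHalf (j * x / n) ^ 2) (b := twoSinhHalf x ^ 2)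
    (M := 8 * ‖x‖ ^ 2) (δ := (k / n) ^ 2 / 2)
    (hs.trans (by nlinarith [norm_nonneg x]))
    (fun j hj ↦ (norm_sub_le _ _).trans (by
      have hkn1 : (k / n : ℝ) ^ 2 ≤ 1 := pow_le_one₀ (by positivity) ((div_le_one hn).mpr hkn')
      nlinarith [ht j hj, norm_nonneg x]))
    (fun j hj ↦ by simpa using ht j hj)
  rw [Nat.card_Icc, add_tsub_cancel_right] at hprod
  rw [cycKer_eq_prod, pow_mul]
  refine hprod.trans (mul_le_mul_of_nonneg_right ?_ (by positivity))
  rw [div_pow, le_div_iff₀ hn]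
  field_simp
  nlinarith [(by positivity : (0 : ℝ) ≤ k ^ 2)]

theorem laurentEval_exp (c : ℤ →₀ ℤ) (z : ℂ) :
    laurentEval c (Complex.exp z) = ∑ j ∈ c.support, (c j : ℂ) * Complex.exp (j * z) := by
  simp only [laurentEval, ← Complex.exp_int_mul]

theorem laurentL1_nonneg (c : ℤ →₀ ℤ) : 0 ≤ laurentL1 c :=
  sum_nonneg fun _ _ ↦ abs_nonneg _

theorem norm_laurentEval_one_le (c : ℤ →₀ ℤ) : ‖laurentEval c 1‖ ≤ laurentL1 c :=
  norm_sum_le_of_le _ fun j _ ↦ by simp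

theorem norm_laurentEval_exp_le {c : ℤ →₀ ℤ} {J : ℝ} (hJ : ∀ j ∈ c.support, |(j : ℝ)| ≤ J)
    (z : ℂ) : ‖laurentEval c (Complex.exp z)‖ ≤ laurentL1 c * Real.exp (J * ‖z‖) := by
  rw [laurentEval_exp, laurentL1, sum_mul]
  refine norm_sum_le_of_le _ fun j hj ↦ ?_
  rw [norm_mul, Complex.norm_intCast]
  gcongr
  refine (Complex.norm_exp_le_exp_norm _).trans (Real.exp_le_exp.mpr ?_)
  rw [norm_mul, Complex.norm_intCast]
  gcongr
  exact hJ j hj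

theorem norm_laurentEval_exp_sub_one_le {c : ℤ →₀ ℤ} {J : ℝ}
    (hJ : ∀ j ∈ c.support, |(j : ℝ)| ≤ J) (z : ℂ) :
    ‖laurentEval c (Complex.exp z) - laurentEval c 1‖
      ≤ laurentL1 c * (J * ‖z‖ * Real.exp (J * ‖z‖)) := by
  rw [laurentEval_exp, laurentEval, ← sum_sub_distrib, laurentL1, sum_mul]
  refine norm_sum_le_of_le _ fun j hj ↦ ?_
  rw [one_zpow, ← mul_sub, norm_mul, Complex.norm_intCast]
  gcongr
  have hjz : ‖(j : ℂ) * z‖ ≤ J * ‖z‖ := by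
    rw [norm_mul, Complex.norm_intCast]
    gcongr
    exact hJ j hj
  calc ‖Complex.exp (j * z) - 1‖ ≤ ‖(j : ℂ) * z‖ * Real.exp ‖(j : ℂ) * z‖ := by
        simpa using Complex.norm_exp_sub_sum_le_norm_mul_exp (j * z) 1
    _ ≤ J * ‖z‖ * Real.exp (J * ‖z‖) := by gcongr; exact (norm_nonneg _).trans hjz

-- Absorbs `k ^ B` into the exponential and extends both bounds to `k = 0`, where the
-- hypotheses are silent.
theorem exists_laurent_growth_bounds {C : ℕ → ℤ →₀ ℤ} {A B D : ℝ}
    (hnorm : ∀ k : ℕ, 1 ≤ k → laurentL1 (C k) ≤ Real.exp (A * k + B * Real.log k))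
    (hsupp : ∀ k : ℕ, 1 ≤ k → ∀ j ∈ (C k).support, |(j : ℝ)| ≤ D * (k : ℝ) ^ 2) :
    ∃ c E J : ℝ, 0 ≤ c ∧ 0 ≤ E ∧ 0 ≤ J ∧ (∀ k : ℕ, laurentL1 (C k) ≤ c * E ^ k) ∧
      ∀ k : ℕ, ∀ j ∈ (C k).support, |(j : ℝ)| ≤ J * (k ^ 2 + 1) := by
  set J₀ := ∑ j ∈ (C 0).support, |(j : ℝ)|
  have hJ : 0 ≤ max D J₀ := (sum_nonneg fun _ _ ↦ abs_nonneg _).trans (le_max_right _ _)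
  refine ⟨max 1 (laurentL1 (C 0)), Real.exp (A + |B|), max D J₀, by positivity, by positivity,
    hJ, fun k ↦ ?_, fun k j hj ↦ ?_⟩
  · rcases Nat.eq_zero_or_pos k with rfl | hk
    · simp
    have hlog : B * Real.log k ≤ |B| * k :=
      (mul_le_mul_of_nonneg_right (le_abs_self B) (Real.log_natCast_nonneg k)).trans
        (mul_le_mul_of_nonneg_left (Real.log_le_self k.cast_nonneg) (abs_nonneg B))
    calc laurentL1 (C k) ≤ Real.exp ((A + |B|) * k) :=
          (hnorm k hk).trans (Real.exp_le_exp.mpr (by linarith))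
      _ ≤ max 1 (laurentL1 (C 0)) * Real.exp (A + |B|) ^ k := by
          rw [mul_comm, Real.exp_nat_mul]
          exact le_mul_of_one_le_left (by positivity) (le_max_left _ _)
  · rcases Nat.eq_zero_or_pos k with rfl | hk
    · have hj₀ : |(j : ℝ)| ≤ J₀ :=
        single_le_sum (f := fun i : ℤ ↦ |(i : ℝ)|) (fun _ _ ↦ abs_nonneg _) hj
      simpa using hj₀.trans (le_max_right D J₀)
    calc |(j : ℝ)| ≤ D * k ^ 2 := hsupp k hk j hj
      _ ≤ max D J₀ * (k ^ 2 + 1) := by nlinarith [le_max_left D J₀, sq_nonneg (k : ℝ)]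

noncomputable def cycMajorant (c E J r : ℝ) (k : ℕ) : ℝ :=
  c * Real.exp J * (1 + J) * (k ^ 2 + 1) * (8 * r ^ 2 * E * Real.exp J) ^ k

theorem summable_cycMajorant {c E J r : ℝ} (hw₀ : 0 ≤ 8 * r ^ 2 * E * Real.exp J)
    (hw₁ : 8 * r ^ 2 * E * Real.exp J < 1) : Summable (cycMajorant c E J r) := by
  have hw : ‖8 * r ^ 2 * E * Real.exp J‖ < 1 := by rwa [Real.norm_of_nonneg hw₀]
  refine (((summable_pow_mul_geometric_of_norm_lt_one 2 hw).add
    (summable_geometric_of_lt_one hw₀ hw₁)).mul_left (c * Real.exp J * (1 + J))).congr fun k ↦ ?_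
  simp only [cycMajorant]
  ring

section GrowthBounds

variable {C : ℕ → ℤ →₀ ℤ} {c E J r : ℝ}

theorem norm_laurentEval_one_mul_le (hE : 0 ≤ E) (hJ : 0 ≤ J)
    (hL1 : ∀ k, laurentL1 (C k) ≤ c * E ^ k) (hr : r ≤ 1) (k : ℕ) {x : ℂ} (hx : ‖x‖ ≤ r) :
    ‖laurentEval (C k) 1 * twoSinhHalf x ^ (2 * k)‖ ≤ cycMajorant c E J r k := by
  have hc : 0 ≤ c := by simpa using (laurentL1_nonneg (C 0)).trans (hL1 0)
  have hS : ‖twoSinhHalf x ^ (2 * k)‖ ≤ (8 * r ^ 2) ^ k :=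
    (norm_twoSinhHalf_pow_le (by linarith) k).trans (by gcongr; nlinarith [norm_nonneg x])
  have hexp : 1 ≤ Real.exp J * (1 + J) * (k ^ 2 + 1) * Real.exp J ^ k :=
    one_le_mul_of_one_le_of_one_le
      (one_le_mul_of_one_le_of_one_le
        (one_le_mul_of_one_le_of_one_le (Real.one_le_exp hJ) (by linarith))
        (by nlinarith [sq_nonneg (k : ℝ)]))
      (one_le_pow₀ (Real.one_le_exp hJ))
  calc ‖laurentEval (C k) 1 * twoSinhHalf x ^ (2 * k)‖ ≤ c * E ^ k * (8 * r ^ 2) ^ k :=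
        norm_mul_le_of_le ((norm_laurentEval_one_le _).trans (hL1 k)) hS
    _ ≤ c * E ^ k * (8 * r ^ 2) ^ k * (Real.exp J * (1 + J) * (k ^ 2 + 1) * Real.exp J ^ k) :=
        le_mul_of_one_le_right (by positivity) hexp
    _ = cycMajorant c E J r k := by simp only [cycMajorant]; ring

theorem norm_cycKer_mul_sub_le (hE : 0 ≤ E) (hJ : 0 ≤ J)
    (hL1 : ∀ k, laurentL1 (C k) ≤ c * E ^ k)
    (hsupp : ∀ k, ∀ j ∈ (C k).support, |(j : ℝ)| ≤ J * (k ^ 2 + 1)) (hr : r ≤ 1)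
    {n k : ℕ} (hn : 1 ≤ n) (hkn : k ≤ n) {x : ℂ} (hx : ‖x‖ ≤ r) :
    ‖cycKer n k x * laurentEval (C k) (Complex.exp (x / n))
        - laurentEval (C k) 1 * twoSinhHalf x ^ (2 * k)‖ ≤ cycMajorant c E J r k / n := by
  have hc : 0 ≤ c := by simpa using (laurentL1_nonneg (C 0)).trans (hL1 0)
  have hn₀ : (0 : ℝ) < n := by exact_mod_cast hn
  have hn₁ : (1 : ℝ) ≤ n := by exact_mod_cast hn
  have hkn' : (k : ℝ) ≤ n := by exact_mod_cast hkn
  have hx₁ : ‖x‖ ≤ 1 := hx.trans hr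
  set u := 8 * r ^ 2
  set L := c * E ^ k * Real.exp (J * (k + 1))
  have hL : L = c * Real.exp J * E ^ k * Real.exp J ^ k := by
    simp only [L]
    rw [mul_add, mul_one, Real.exp_add, mul_comm J, Real.exp_nat_mul]
    ring
  have hy : J * (k ^ 2 + 1) * ‖x / n‖ ≤ J * (k ^ 2 + 1) / n := by
    rw [norm_div, Complex.norm_natCast, mul_div_assoc']
    exact div_le_div_of_nonneg_right (mul_le_of_le_one_right (by positivity) hx₁) hn₀.le
  have hy' : J * (k ^ 2 + 1) / n ≤ J * (k + 1) := by
    rw [div_le_iff₀ hn₀]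
    nlinarith [mul_le_mul_of_nonneg_left hkn' (by positivity : (0 : ℝ) ≤ J * k)]
  have hxu : 8 * ‖x‖ ^ 2 ≤ u := by simp only [u]; nlinarith [norm_nonneg x]
  have hK : ‖cycKer n k x - twoSinhHalf x ^ (2 * k)‖ ≤ k ^ 2 / n * u ^ k :=
    (norm_cycKer_sub_pow_le hkn hx₁).trans (by gcongr)
  have hS : ‖twoSinhHalf x ^ (2 * k)‖ ≤ u ^ k :=
    (norm_twoSinhHalf_pow_le (by linarith) k).trans (by gcongr; linarith [sq_nonneg ‖x‖])
  have ha : ‖laurentEval (C k) (Complex.exp (x / n))‖ ≤ L :=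
    (norm_laurentEval_exp_le (hsupp k) _).trans
      (mul_le_mul (hL1 k) (Real.exp_le_exp.mpr (hy.trans hy')) (by positivity) (by positivity))
  have hab : ‖laurentEval (C k) (Complex.exp (x / n)) - laurentEval (C k) 1‖
      ≤ J * (k ^ 2 + 1) / n * L := by
    refine (norm_laurentEval_exp_sub_one_le (hsupp k) _).trans ?_
    calc laurentL1 (C k) * (J * (k ^ 2 + 1) * ‖x / n‖ * Real.exp (J * (k ^ 2 + 1) * ‖x / n‖))
        ≤ c * E ^ k * (J * (k ^ 2 + 1) / n * Real.exp (J * (k + 1))) :=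
          mul_le_mul (hL1 k) (mul_le_mul hy (Real.exp_le_exp.mpr (hy.trans hy'))
            (Real.exp_pos _).le (by positivity)) (by positivity) (by positivity)
      _ = J * (k ^ 2 + 1) / n * L := by ring
  calc ‖cycKer n k x * laurentEval (C k) (Complex.exp (x / n))
        - laurentEval (C k) 1 * twoSinhHalf x ^ (2 * k)‖
      = ‖(cycKer n k x - twoSinhHalf x ^ (2 * k)) * laurentEval (C k) (Complex.exp (x / n))
        + (laurentEval (C k) (Complex.exp (x / n)) - laurentEval (C k) 1)
          * twoSinhHalf x ^ (2 * k)‖ := by ring_nf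
    _ ≤ k ^ 2 / n * u ^ k * L + J * (k ^ 2 + 1) / n * L * u ^ k :=
        norm_add_le_of_le (norm_mul_le_of_le hK ha) (norm_mul_le_of_le hab hS)
    _ = (k ^ 2 + J * (k ^ 2 + 1)) * (c * Real.exp J * (u * E * Real.exp J) ^ k) / n := by
        rw [hL]
        ring
    _ ≤ (1 + J) * (k ^ 2 + 1) * (c * Real.exp J * (u * E * Real.exp J) ^ k) / n := by
        gcongr
        nlinarith [sq_nonneg (k : ℝ)]
    _ = cycMajorant c E J r k / n := by
        simp only [cycMajorant, u]
        ring

end GrowthBounds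

theorem tendstoUniformlyOn_sum_range_tsum {X G : Type*} [NormedAddCommGroup G] [CompleteSpace G]
    {F : ℕ → ℕ → X → G} {T : ℕ → X → G} {M : ℕ → ℝ} {s : Set X} (hM : Summable M)
    (hM₀ : ∀ k, 0 ≤ M k) (hT : ∀ k, ∀ x ∈ s, ‖T k x‖ ≤ M k)
    (hFT : ∀ n k, 1 ≤ n → k ≤ n → ∀ x ∈ s, ‖F n k x - T k x‖ ≤ M k / n) :
    TendstoUniformlyOn (fun n x ↦ ∑ k ∈ range (n + 1), F n k x) (fun x ↦ ∑' k, T k x) atTop s := by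
  have hbound : Tendsto (fun n : ℕ ↦ (∑' k, M k) / n + ∑' i, M (i + (n + 1))) atTop (𝓝 0) := by
    simpa using (tendsto_const_div_atTop_nhds_zero_nat _).add
      ((tendsto_sum_nat_add M).comp (tendsto_add_atTop_nat 1))
  rw [Metric.tendstoUniformlyOn_iff]
  intro ε hε
  filter_upwards [hbound.eventually (gt_mem_nhds hε), eventually_ge_atTop 1] with n hn hn₁ x hx
  have hTx : Summable (T · x) := hM.of_norm_bounded fun k ↦ hT k x hx
  rw [dist_eq_norm, ← hTx.sum_add_tsum_nat_add (n + 1)]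
  refine lt_of_le_of_lt ?_ hn
  calc ‖∑ k ∈ range (n + 1), T k x + ∑' i, T (i + (n + 1)) x - ∑ k ∈ range (n + 1), F n k x‖
      = ‖∑ k ∈ range (n + 1), (T k x - F n k x) + ∑' i, T (i + (n + 1)) x‖ := by
        rw [sum_sub_distrib]; abel_nf
    _ ≤ ∑ k ∈ range (n + 1), M k / n + ∑' i, M (i + (n + 1)) :=
        norm_add_le_of_le
          (norm_sum_le_of_le _ fun k hk ↦ norm_sub_rev (T k x) _ ▸
            hFT n k hn₁ (Nat.lt_succ_iff.mp (mem_range.mp hk)) x hx)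
          (tsum_of_norm_bounded ((summable_nat_add_iff (n + 1)).mpr hM).hasSum
            fun i ↦ hT _ x hx)
    _ ≤ (∑' k, M k) / n + ∑' i, M (i + (n + 1)) := by
        rw [← sum_div]
        gcongr
        exact hM.sum_le_tsum _ fun k _ ↦ hM₀ k

theorem TendstoLocallyUniformlyOn.iteratedDeriv {ι E : Type*} [NormedAddCommGroup E]
    [NormedSpace ℂ E] [CompleteSpace E] {φ : Filter ι} {F : ι → ℂ → E} {f : ℂ → E} {U : Set ℂ}
    (hf : TendstoLocallyUniformlyOn F f φ U) (hF : ∀ i, Differentiable ℂ (F i)) (hU : IsOpen U)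
    (m : ℕ) :
    TendstoLocallyUniformlyOn (fun i ↦ iteratedDeriv m (F i)) (iteratedDeriv m f) φ U := by
  induction m with
  | zero => simpa only [iteratedDeriv_zero] using hf
  | succ m ih =>
    simpa only [iteratedDeriv_succ, Function.comp_def] using ih.deriv (Eventually.of_forall
      fun i ↦ ((hF i).contDiff.differentiable_iteratedDeriv m
        (WithTop.coe_lt_top _)).differentiableOn) hU

theorem differentiable_sum_cycKer_mul (C : ℕ → ℤ →₀ ℤ) (n : ℕ) :
    Differentiable ℂ fun α ↦
      ∑ k ∈ range (n + 1), cycKer n k α * laurentEval (C k) (Complex.exp (α / n)) := by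
  simp only [cycKer, laurentEval_exp]
  fun_prop

theorem derivative_convergence_MMR_general (C : ℕ → (ℤ →₀ ℤ)) (A B D : ℝ)
    (hnorm : ∀ k : ℕ, 1 ≤ k → laurentL1 (C k) ≤ Real.exp (A * k + B * Real.log k))
    (hsupp : ∀ k : ℕ, 1 ≤ k → ∀ j ∈ (C k).support, |(j : ℝ)| ≤ D * (k : ℝ) ^ 2)
    (f : ℕ → ℂ → ℂ)
    (hf : ∀ n : ℕ, ∀ α : ℂ,
      f n α = ∑ k ∈ Finset.range (n + 1), cycKer n k α * laurentEval (C k) (Complex.exp (α / n)))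
    (g : ℂ → ℂ)
    (hg : ∀ α : ℂ, g α = ∑' k : ℕ,
      laurentEval (C k) 1 * (Complex.exp (α / 2) - Complex.exp (-α / 2)) ^ (2 * k)) :
    ∀ m : ℕ, Filter.Tendsto (fun n : ℕ => iteratedDeriv m (f n) 0) Filter.atTop
      (nhds (iteratedDeriv m g 0)) := by
  obtain ⟨c, E, J, hc, hE, hJ, hL1, hsupp'⟩ := exists_laurent_growth_bounds hnorm hsupp
  obtain ⟨r, ⟨hr₁, hw⟩, hr₀⟩ : ∃ r : ℝ, (r ≤ 1 ∧ 8 * r ^ 2 * E * Real.exp J < 1) ∧ 0 < r := by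
    have hw : Tendsto (fun r : ℝ ↦ 8 * r ^ 2 * E * Real.exp J) (𝓝 0) (𝓝 0) :=
      (by fun_prop : Continuous fun r : ℝ ↦ 8 * r ^ 2 * E * Real.exp J).tendsto' 0 0 (by simp)
    refine (((eventually_le_nhds one_pos).and (hw.eventually (gt_mem_nhds one_pos))).filter_mono
      nhdsWithin_le_nhds |>.and self_mem_nhdsWithin).exists (f := 𝓝[>] 0)
  have hf' : f = fun n α ↦
      ∑ k ∈ range (n + 1), cycKer n k α * laurentEval (C k) (Complex.exp (α / n)) :=
    funext fun n ↦ funext (hf n)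
  have hg' : g = fun α ↦ ∑' k, laurentEval (C k) 1 * twoSinhHalf α ^ (2 * k) := funext hg
  have hunif : TendstoUniformlyOn f g atTop (Metric.ball 0 r) := by
    rw [hf', hg']
    refine tendstoUniformlyOn_sum_range_tsum (summable_cycMajorant (by positivity) hw)
      (fun k ↦ by unfold cycMajorant; positivity)
      (fun k x hx ↦ norm_laurentEval_one_mul_le hE hJ hL1 hr₁ k ?_)
      (fun n k hn hkn x hx ↦
        norm_cycKer_mul_sub_le hE hJ hL1 hsupp' hr₁ hn hkn ?_)
    all_goals simpa using (Metric.mem_ball.mp hx).le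
  intro m
  have hfd : ∀ n, Differentiable ℂ (f n) := fun n ↦ hf' ▸ differentiable_sum_cycKer_mul C n
  exact (hunif.tendstoLocallyUniformlyOn.iteratedDeriv hfd Metric.isOpen_ball m).tendsto_at
    (Metric.mem_ball_self hr₀)

/-- Under the growth hypotheses on `(C_k)`, with
`f_n(α) = ∑_{k=0}^{n} K(n,k,α) · C_k(e^{α/n})` and
`g(α) = ∑_{k=0}^∞ C_k(1) (e^{α/2} − e^{−α/2})^{2k}` (which converges on some open
neighborhood of `0`), for every `m ≥ 0` the limit `lim_{n→∞} f_n^{(m)}(0)` exists and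
equals `g^{(m)}(0)`. -/
theorem derivative_convergence_MMR (C : ℕ → (ℤ →₀ ℤ)) (A B D : ℝ)
    (hA : 0 < A) (hB : 0 < B) (hD : 0 < D)
    (hnorm : ∀ k : ℕ, 1 ≤ k → laurentL1 (C k) ≤ Real.exp (A * k + B * Real.log k))
    (hsupp : ∀ k : ℕ, 1 ≤ k → ∀ j ∈ (C k).support, |(j : ℝ)| ≤ D * (k : ℝ) ^ 2)
    (f : ℕ → ℂ → ℂ)
    (hf : ∀ n : ℕ, ∀ α : ℂ,
      f n α = ∑ k ∈ Finset.range (n + 1), cycKer n k α * laurentEval (C k) (Complex.exp (α / n)))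
    (g : ℂ → ℂ)
    (hg : ∀ α : ℂ, g α = ∑' k : ℕ,
      laurentEval (C k) 1 * (Complex.exp (α / 2) - Complex.exp (-α / 2)) ^ (2 * k)) :
    ∀ m : ℕ, Filter.Tendsto (fun n : ℕ => iteratedDeriv m (f n) 0) Filter.atTop
      (nhds (iteratedDeriv m g 0)) :=
  derivative_convergence_MMR_general C A B D hnorm hsupp f hf g hg
end
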